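/- arXiv:0710.2107 — 3 statements merged into one kernel-verified Lean document; each statement's English description precedes it below -/
import Mathlib

section
/- Let G act on a simplicial tree T without inversions, and let T' be obtained from T by collapsing the orbit of a collapsible edge e. Then every subgroup of G that is elliptic in T' is elliptic in T. Hence T and T' have exactly the same elliptic subgroups. -/
/-- A graph in the sense of Serre: oriented edges with a fixed-point-free
reversal involution. -/
structure SGraph where
  V : Type
  E : Type
  o : E → V
  t : E → V
  bar : E → E
  bar_bar : ∀ e, bar (bar e) = e
  bar_ne : ∀ e, bar e ≠ e
  o_bar : ∀ e, o (bar e) = t e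

namespace SGraph

/-- Edge paths in a graph. -/
inductive Walk (Γ : SGraph) : Γ.V → Γ.V → Type
  | nil (v : Γ.V) : Walk Γ v v
  | cons (e : Γ.E) {w : Γ.V} (p : Walk Γ (Γ.t e) w) : Walk Γ (Γ.o e) w

/-- The list of edges traversed by a walk. -/
def Walk.edges {Γ : SGraph} : {v w : Γ.V} → Γ.Walk v w → List Γ.E
  | _, _, .nil _ => []
  | _, _, .cons e p => e :: p.edges

/-- The vertices visited by a walk. -/
def Walk.support {Γ : SGraph} : {v w : Γ.V} → Γ.Walk v w → List Γ.V
  | v, _, .nil _ => [v]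
  | _, _, .cons e p => Γ.o e :: p.support

/-- A walk is reduced if it never backtracks. -/
def Walk.Reduced {Γ : SGraph} {v w : Γ.V} (p : Γ.Walk v w) : Prop :=
  p.edges.Chain' (fun e f => f ≠ Γ.bar e)

/-- A (simplicial) tree: any two vertices are joined by a unique reduced
edge path. -/
def IsTreeG (Γ : SGraph) : Prop :=
  (∀ v w : Γ.V, Nonempty (Γ.Walk v w)) ∧
  ∀ v w : Γ.V, ∀ p q : Γ.Walk v w, p.Reduced → q.Reduced → p = q

end SGraph

/-- A `G`-tree: a simplicial tree with a `G`-action by simplicial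
automorphisms, without inversions. -/
structure GTree (G : Type) [Group G] extends SGraph where
  aV : G → V → V
  aE : G → E → E
  aV_one : ∀ v, aV 1 v = v
  aV_mul : ∀ g h v, aV (g * h) v = aV g (aV h v)
  aE_one : ∀ e, aE 1 e = e
  aE_mul : ∀ g h e, aE (g * h) e = aE g (aE h e)
  a_o : ∀ g e, o (aE g e) = aV g (o e)
  a_t : ∀ g e, t (aE g e) = aV g (t e)
  a_bar : ∀ g e, bar (aE g e) = aE g (bar e)
  no_inversions : ∀ g e, aE g e ≠ bar e
  tree : toSGraph.IsTreeG

namespace GTree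

variable {G : Type} [Group G]

/-- The (setwise pointwise) stabilizer of a vertex. -/
def stabV (T : GTree G) (v : T.V) : Set G := {g | T.aV g v = v}

/-- The stabilizer of an edge. -/
def stabE (T : GTree G) (e : T.E) : Set G := {g | T.aE g e = e}

/-- A subgroup is elliptic if it fixes a vertex. -/
def Elliptic (T : GTree G) (H : Subgroup G) : Prop :=
  ∃ v : T.V, ∀ h ∈ H, T.aV h v = v

/-- Two `G`-trees with the same elliptic subgroups. -/
def SameElliptics (T T' : GTree G) : Prop :=
  ∀ H : Subgroup G, T.Elliptic H ↔ T'.Elliptic H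

/-- The orbit of an oriented edge. -/
def ordOrbit (T : GTree G) (e : T.E) : Set T.E := {f | ∃ g, f = T.aE g e}

/-- The orbit of the geometric edge `{e, ē}`. -/
def geomOrbit (T : GTree G) (e : T.E) : Set T.E :=
  {f | ∃ g, f = T.aE g e ∨ f = T.aE g (T.bar e)}

/-- The label of an oriented edge is `=` when the edge-to-initial-vertex
inclusion `G_e → G_{o(e)}` is surjective, i.e. `G_{o(e)} ⊆ G_e`. -/
def lab (T : GTree G) (e : T.E) : Prop := T.stabV (T.o e) ⊆ T.stabE e

/-- A collapsible edge: `G_e = G_{o(e)}` and the endpoints lie in different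
`G`-orbits. -/
def CollapsibleEdge (T : GTree G) (e : T.E) : Prop :=
  T.stabV (T.o e) ⊆ T.stabE e ∧ ∀ g : G, T.aV g (T.o e) ≠ T.t e

/-- A reduced `G`-tree admits no collapse move. -/
def Reduced (T : GTree G) : Prop := ∀ e : T.E, ¬ T.CollapsibleEdge e

/-- The data of an (equivariant) collapse of the invariant edge set `S` of `T`,
producing the `G`-tree `T'`. -/
structure CollapseOnto (T T' : GTree G) (S : Set T.E) where
  inv_bar : ∀ e ∈ S, T.bar e ∈ S
  inv_act : ∀ (g : G), ∀ e ∈ S, T.aE g e ∈ S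
  φV : T.V → T'.V
  φE : T.E → Option T'.E
  equivV : ∀ g v, φV (T.aV g v) = T'.aV g (φV v)
  equivE : ∀ g e, φE (T.aE g e) = (φE e).map (T'.aE g)
  collapsed : ∀ e, φE e = none ↔ e ∈ S
  map_o : ∀ e e', φE e = some e' → T'.o e' = φV (T.o e)
  map_t : ∀ e e', φE e = some e' → T'.t e' = φV (T.t e)
  map_bar : ∀ e e', φE e = some e' → φE (T.bar e) = some (T'.bar e')
  surjV : Function.Surjective φV
  injE : ∀ e₁ e₂ e', φE e₁ = some e' → φE e₂ = some e' → e₁ = e₂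
  surjE : ∀ e', ∃ e, φE e = some e'
  identify : ∀ v w : T.V, φV v = φV w ↔
    ∃ p : T.toSGraph.Walk v w, ∀ x ∈ p.edges, x ∈ S

/-- A collapse move: equivariantly collapsing the orbit of a collapsible
edge. -/
def IsCollapse (T T' : GTree G) (e : T.E) : Prop :=
  T.CollapsibleEdge e ∧ Nonempty (CollapseOnto T T' (T.geomOrbit e))

/-- Iterated collapse of two edge orbits. -/
def IsCollapse₂ (T T' : GTree G) (e f : T.E) : Prop :=
  T.CollapsibleEdge e ∧ ∃ (T₁ : GTree G) (c : CollapseOnto T T₁ (T.geomOrbit e))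
    (f₁ : T₁.E), c.φE f = some f₁ ∧ IsCollapse T₁ T' f₁

/-- One collapse move. -/
def DefStep (T T' : GTree G) : Prop := ∃ e : T.E, IsCollapse T T' e

/-- Elementary deformations: finite sequences of collapse and expansion
moves. -/
def Deformation : GTree G → GTree G → Prop :=
  Relation.ReflTransGen (fun T T' => DefStep T T' ∨ DefStep T' T)

/-- Equivariant isomorphism of `G`-trees. -/
def EquivIso (T T' : GTree G) : Prop :=
  ∃ (ψV : T.V → T'.V) (ψE : T.E → T'.E),
    Function.Bijective ψV ∧ Function.Bijective ψE ∧
    (∀ g v, ψV (T.aV g v) = T'.aV g (ψV v)) ∧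
    (∀ g x, ψE (T.aE g x) = T'.aE g (ψE x)) ∧
    (∀ x, ψE (T.bar x) = T'.bar (ψE x)) ∧
    (∀ x, T'.o (ψE x) = ψV (T.o x)) ∧ (∀ x, T'.t (ψE x) = ψV (T.t x))

/-- Cocompactness: finitely many edge orbits. -/
def Cocompact (T : GTree G) : Prop :=
  ∃ l : List T.E, ∀ e : T.E, ∃ g : G, ∃ f ∈ l, e = T.aE g f

/-- Data of a slide move: the orbit of `e` is slid over (the orbit of) `f`. -/
structure SlideData (T T' : GTree G) (e f : T.E) where
  h_o : T.o e = T.o f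
  hstab : T.stabE e ⊆ T.stabE f
  hne : e ∉ T.geomOrbit f
  ψV : T.V → T'.V
  ψE : T.E → T'.E
  bijV : Function.Bijective ψV
  bijE : Function.Bijective ψE
  equivV : ∀ g v, ψV (T.aV g v) = T'.aV g (ψV v)
  equivE : ∀ g x, ψE (T.aE g x) = T'.aE g (ψE x)
  ψbar : ∀ x, ψE (T.bar x) = T'.bar (ψE x)
  untouched : ∀ x, x ∉ T.ordOrbit e → x ∉ T.ordOrbit (T.bar e) →
    T'.o (ψE x) = ψV (T.o x) ∧ T'.t (ψE x) = ψV (T.t x)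
  slid : ∀ g : G, T'.o (ψE (T.aE g e)) = ψV (T.aV g (T.t f)) ∧
    T'.t (ψE (T.aE g e)) = ψV (T.aV g (T.t e))

/-- A slide move of (the orbit of) some edge over the edge `f`. -/
def SlideMoveOver (T T' : GTree G) (f : T.E) : Prop :=
  ∃ e : T.E, Nonempty (SlideData T T' e f)

/-- A slide move. -/
def SlideMove (T T' : GTree G) : Prop := ∃ f : T.E, SlideMoveOver T T' f

/-- An induction move: an expansion and collapse along an ascending loop.
In the common expansion `T''`, the edges `e` and `f` form the subdivided
loop; collapsing `e` gives the tree `T` with ascending loop and vertex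
group `A`, collapsing `f` gives the tree `T'` with vertex group `B`. -/
def InductionMove (T T' : GTree G) : Prop :=
  ∃ (T'' : GTree G) (e f : T''.E), e ∉ T''.geomOrbit f ∧
    T''.o f = T''.t e ∧ (∃ s : G, T''.t f = T''.aV s (T''.o e)) ∧
    IsCollapse T'' T e ∧ IsCollapse T'' T' f

/-- An `A⁻¹`-move: an induction move followed by a collapse, removing a
strict ascending loop. `d` is the edge joining the loop vertex to the
vertex with group `C`, `ℓ` is the loop edge; `B` is proper in `C` and in
`A`, and no other edges are incident to the loop. -/
def AInvMove (T T' : GTree G) : Prop :=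
  ∃ T₁ : GTree G, InductionMove T T₁ ∧
  ∃ d : T₁.E, IsCollapse T₁ T' d ∧
    ¬ (T₁.stabV (T₁.t d) ⊆ T₁.stabE d) ∧
    ∃ ℓ : T₁.E, T₁.o ℓ = T₁.o d ∧ (∃ s : G, T₁.t ℓ = T₁.aV s (T₁.o ℓ)) ∧
      T₁.stabV (T₁.o ℓ) ⊆ T₁.stabE ℓ ∧ ¬ (T₁.stabV (T₁.t ℓ) ⊆ T₁.stabE ℓ) ∧
      ∀ x : T₁.E, T₁.o x = T₁.o d → x ∈ T₁.geomOrbit ℓ ∨ x ∈ T₁.geomOrbit d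

/-- An `A`-move is the reverse of an `A⁻¹`-move. -/
def AMove (T T' : GTree G) : Prop := AInvMove T' T

/-- A strict ascending loop in the quotient graph of groups: an edge whose
endpoints are in the same orbit, with `G_{o(ℓ)} = G_ℓ` but `G_ℓ` properly
contained in `G_{t(ℓ)}`. -/
def HasStrictAscLoop (T : GTree G) : Prop :=
  ∃ (ℓ : T.E) (s : G), T.t ℓ = T.aV s (T.o ℓ) ∧
    T.stabV (T.o ℓ) ⊆ T.stabE ℓ ∧ ¬ (T.stabV (T.t ℓ) ⊆ T.stabE ℓ)

/-- Type I Whitehead move between reduced trees. -/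
def WhiteheadI (T T' : GTree G) : Prop :=
  T.Reduced ∧ T'.Reduced ∧ ∃ (T'' : GTree G) (e e' : T''.E),
    e' ∉ T''.geomOrbit e ∧ IsCollapse T'' T e ∧ IsCollapse T'' T' e'

/-- Type II Whitehead move between reduced trees. -/
def WhiteheadII (T T' : GTree G) : Prop :=
  T.Reduced ∧ T'.Reduced ∧ ∃ (T'' : GTree G) (e e' f' : T''.E),
    e' ∉ T''.geomOrbit e ∧ f' ∉ T''.geomOrbit e ∧ f' ∉ T''.geomOrbit e' ∧
    IsCollapse T'' T e ∧ IsCollapse₂ T'' T' e' f'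

end GTree

/-!
The collapse map `φ` is equivariant, so it carries fixed points to fixed points. Conversely,
since `G_{o(e)} = G_e`, the assignment `g • o(e) ↦ g • t(e)`, extended by the identity, is a
well-defined equivariant map `r` on the vertices of `T`; since `o(e)` and `t(e)` lie in different
orbits, `r` identifies the two endpoints of every collapsed edge, hence is constant on the fibres
of `φ`. If `H` fixes `φ v`, then `h • v` and `v` lie in one fibre for `h ∈ H`, so
`h • r v = r (h • v) = r v`.
-/

namespace GTree

variable {G : Type} [Group G] (T : GTree G)

lemma aV_inv_aV (g : G) (v : T.V) : T.aV g⁻¹ (T.aV g v) = v := by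
  rw [← T.aV_mul, inv_mul_cancel, T.aV_one]

lemma aV_aV_inv (g : G) (v : T.V) : T.aV g (T.aV g⁻¹ v) = v := by
  simpa using T.aV_inv_aV g⁻¹ v

lemma t_bar (e : T.E) : T.t (T.bar e) = T.o e := by
  rw [← T.o_bar, T.bar_bar]

lemma aV_t_of_mem_stabE {e : T.E} {g : G} (hg : g ∈ T.stabE e) : T.aV g (T.t e) = T.t e := by
  rw [← T.a_t, show T.aE g e = e from hg]

variable {T}

lemma aV_t_eq_of_aV_o_eq {e : T.E} (he : T.lab e) {g g' : G}
    (h : T.aV g (T.o e) = T.aV g' (T.o e)) : T.aV g (T.t e) = T.aV g' (T.t e) := by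
  have hmem : g'⁻¹ * g ∈ T.stabV (T.o e) := by
    show T.aV (g'⁻¹ * g) (T.o e) = T.o e
    rw [T.aV_mul, h, T.aV_inv_aV]
  have hfix := T.aV_t_of_mem_stabE (he hmem)
  rw [T.aV_mul] at hfix
  conv_rhs => rw [← hfix, T.aV_aV_inv]

variable (T) in
open Classical in
noncomputable def retractAlong (e : T.E) (x : T.V) : T.V :=
  if h : ∃ g, T.aV g (T.o e) = x then T.aV h.choose (T.t e) else x

variable {e : T.E}

lemma retractAlong_aV_o (he : T.lab e) (g : G) :
    T.retractAlong e (T.aV g (T.o e)) = T.aV g (T.t e) := by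
  have hx : ∃ g', T.aV g' (T.o e) = T.aV g (T.o e) := ⟨g, rfl⟩
  rw [retractAlong, dif_pos hx]
  exact aV_t_eq_of_aV_o_eq he hx.choose_spec

lemma retractAlong_of_not_mem_orbit {x : T.V} (hx : ¬ ∃ g, T.aV g (T.o e) = x) :
    T.retractAlong e x = x :=
  dif_neg hx

lemma retractAlong_aV_t (he : ∀ g : G, T.aV g (T.o e) ≠ T.t e) (g : G) :
    T.retractAlong e (T.aV g (T.t e)) = T.aV g (T.t e) := by
  refine retractAlong_of_not_mem_orbit ?_
  rintro ⟨g', hg'⟩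
  exact he (g⁻¹ * g') (by rw [T.aV_mul, hg', T.aV_inv_aV])

lemma retractAlong_aV (he : T.lab e) (g : G) (x : T.V) :
    T.retractAlong e (T.aV g x) = T.aV g (T.retractAlong e x) := by
  by_cases hx : ∃ g', T.aV g' (T.o e) = x
  · obtain ⟨g', rfl⟩ := hx
    rw [← T.aV_mul, retractAlong_aV_o he, retractAlong_aV_o he, T.aV_mul]
  · rw [retractAlong_of_not_mem_orbit hx, retractAlong_of_not_mem_orbit]
    rintro ⟨g', hg'⟩
    exact hx ⟨g⁻¹ * g', by rw [T.aV_mul, hg', T.aV_inv_aV]⟩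

lemma retractAlong_o_eq_t (hcol : T.CollapsibleEdge e) {f : T.E} (hf : f ∈ T.geomOrbit e) :
    T.retractAlong e (T.o f) = T.retractAlong e (T.t f) := by
  obtain ⟨g, rfl | rfl⟩ := hf
  · rw [T.a_o, T.a_t, retractAlong_aV_o hcol.1, retractAlong_aV_t hcol.2]
  · rw [T.a_o, T.a_t, T.o_bar, T.t_bar, retractAlong_aV_o hcol.1, retractAlong_aV_t hcol.2]

lemma retractAlong_eq_of_walk (hcol : T.CollapsibleEdge e) :
    ∀ {v w : T.V} (p : T.toSGraph.Walk v w),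
      (∀ x ∈ p.edges, x ∈ T.geomOrbit e) → T.retractAlong e v = T.retractAlong e w
  | _, _, .nil _, _ => rfl
  | _, _, .cons f p, hp => by
    rw [retractAlong_o_eq_t hcol (hp f List.mem_cons_self),
      retractAlong_eq_of_walk hcol p fun x hx => hp x (List.mem_cons_of_mem _ hx)]

lemma Elliptic.collapse {T' : GTree G} {S : Set T.E} (c : CollapseOnto T T' S)
    {H : Subgroup G} (hH : T.Elliptic H) : T'.Elliptic H := by
  obtain ⟨v, hv⟩ := hH
  exact ⟨c.φV v, fun h hh => by rw [← c.equivV, hv h hh]⟩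

lemma Elliptic.of_collapse {T' : GTree G} (hcol : T.CollapsibleEdge e)
    (c : CollapseOnto T T' (T.geomOrbit e)) {H : Subgroup G} (hH : T'.Elliptic H) :
    T.Elliptic H := by
  obtain ⟨v', hv'⟩ := hH
  obtain ⟨v, rfl⟩ := c.surjV v'
  refine ⟨T.retractAlong e v, fun h hh => ?_⟩
  have hfibre : c.φV (T.aV h v) = c.φV v := by rw [c.equivV, hv' h hh]
  obtain ⟨p, hp⟩ := (c.identify _ _).mp hfibre
  rw [← retractAlong_aV hcol.1]
  exact retractAlong_eq_of_walk hcol p hp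

end GTree

open GTree in
/-- If `T'` is obtained from a `G`-tree `T` by collapsing the orbit of a
collapsible edge, then every subgroup elliptic in `T'` is elliptic in `T`;
hence `T` and `T'` have exactly the same elliptic subgroups. -/
theorem collapse_move_elliptics {G : Type} [Group G] (T T' : GTree G) (e : T.E)
    (hcol : T.CollapsibleEdge e) (c : CollapseOnto T T' (T.geomOrbit e)) :
    (∀ H : Subgroup G, T'.Elliptic H → T.Elliptic H) ∧ T.SameElliptics T' :=
  ⟨fun _ hH => hH.of_collapse hcol c,
    fun _ => ⟨fun hH => hH.collapse c, fun hH => hH.of_collapse hcol c⟩⟩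
end

section
/- Let Γ be a graph of groups with one vertex with group A and one loop edge with group B and inclusion maps i₀, i₁ : B → A such that i₀ is an isomorphism (an ascending loop). If φ = i₁ ∘ i₀⁻¹ : A → A is the monodromy and B' is a subgroup with φ(A) ⊆ B' ⊆ A, then the fundamental group of Γ is isomorphic to the fundamental group of the graph of groups with one vertex with group B' and one ascending loop with monodromy the restriction φ|_{B'} : B' → B'. -/
/-- The relations presenting the ascending HNN extension
`⟨A, t | a·a' = (aa'), t a t⁻¹ = φ(a) (a ∈ A)⟩` of a group `A` over an
endomorphism `φ`; the generators are the elements of `A` together with the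
stable letter `t = Sum.inr ()`. -/
def ascHNNRels (A : Type) [Group A] (φ : A → A) : Set (FreeGroup (A ⊕ Unit)) :=
  {r | (∃ a a' : A, r = FreeGroup.of (Sum.inl a) * FreeGroup.of (Sum.inl a') *
          (FreeGroup.of (Sum.inl (a * a')))⁻¹) ∨
       (∃ a : A, r = FreeGroup.of (Sum.inr ()) * FreeGroup.of (Sum.inl a) *
          (FreeGroup.of (Sum.inr ()))⁻¹ * (FreeGroup.of (Sum.inl (φ a)))⁻¹)}

/-! Every `a ∈ A` equals `t⁻¹ φ(a) t` in the HNN extension of `A`, and `φ(a)` lies in `B'`.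
So `a ↦ t⁻¹ φ(a) t`, `t ↦ t` defines a homomorphism into the HNN extension of `B'`, and it is
inverse to the homomorphism induced by the inclusion `B' ≤ A`. -/

abbrev AscHNN (G : Type) [Group G] (φ : G → G) : Type := PresentedGroup (ascHNNRels G φ)

namespace AscHNN

section Presentation

variable {G : Type} [Group G] {φ : G → G}

def t : AscHNN G φ := PresentedGroup.of (Sum.inr ())

def of : G →* AscHNN G φ :=
  MonoidHom.mk' (fun a => PresentedGroup.of (Sum.inl a)) fun a a' =>
    (eq_of_mul_inv_eq_one <| PresentedGroup.one_of_mem <| Or.inl ⟨a, a', rfl⟩).symm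

lemma t_mul_of_mul_t_inv (a : G) : (t : AscHNN G φ) * of a * t⁻¹ = of (φ a) :=
  eq_of_mul_inv_eq_one <| PresentedGroup.one_of_mem <| Or.inr ⟨a, rfl⟩

lemma t_inv_mul_of_map_mul_t (a : G) : (t : AscHNN G φ)⁻¹ * of (φ a) * t = of a := by
  rw [← t_mul_of_mul_t_inv]
  group

variable {K : Type} [Group K] (f : G →* K) (k : K) (hk : ∀ a, k * f a * k⁻¹ = f (φ a))

def lift : AscHNN G φ →* K :=
  PresentedGroup.toGroup (f := Sum.elim f fun _ => k) <| by
    rintro r (⟨a, a', rfl⟩ | ⟨a, rfl⟩) <;> simp [hk]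

@[simp] lemma lift_of (a : G) : lift f k hk (of a) = f a := PresentedGroup.toGroup.of _

@[simp] lemma lift_t : lift f k hk t = k := PresentedGroup.toGroup.of _

@[ext] lemma hom_ext {F F' : AscHNN G φ →* K} (h_of : ∀ a, F (of a) = F' (of a))
    (h_t : F t = F' t) : F = F' :=
  PresentedGroup.ext <| by rintro (a | ⟨⟩) <;> simp_all [of, t]

end Presentation

section Restriction

variable {G : Type} [Group G] (φ : G →* G) (H : Subgroup G) (hφ : ∀ a, φ a ∈ H)

abbrev restrictMonodromy : H → H := fun b => ⟨φ b, hφ b⟩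

def toRestrict : AscHNN G φ →* AscHNN H (restrictMonodromy φ H hφ) :=
  lift ((MulAut.conj (t⁻¹)).toMonoidHom.comp (of.comp (φ.codRestrict H hφ))) t fun a => by
    simpa [mul_assoc] using
      (t_inv_mul_of_map_mul_t (φ := restrictMonodromy φ H hφ) (φ.codRestrict H hφ a)).symm

def ofRestrict : AscHNN H (restrictMonodromy φ H hφ) →* AscHNN G φ :=
  lift (of.comp H.subtype) t fun b => t_mul_of_mul_t_inv (b : G)

@[simp] lemma toRestrict_of (a : G) : toRestrict φ H hφ (of a) = t⁻¹ * of ⟨φ a, hφ a⟩ * t :=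
  lift_of _ _ _ a

@[simp] lemma toRestrict_t : toRestrict φ H hφ t = t :=
  lift_t _ _ _

@[simp] lemma ofRestrict_of (b : H) : ofRestrict φ H hφ (of b) = of (b : G) :=
  lift_of _ _ _ b

@[simp] lemma ofRestrict_t : ofRestrict φ H hφ t = t :=
  lift_t _ _ _

def restrictEquiv : AscHNN G φ ≃* AscHNN H (restrictMonodromy φ H hφ) :=
  MonoidHom.toMulEquiv (toRestrict φ H hφ) (ofRestrict φ H hφ)
    (by ext a <;> simp [t_inv_mul_of_map_mul_t])
    (by ext b <;> simp [t_inv_mul_of_map_mul_t])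

end Restriction

end AscHNN

theorem induction_move_fundamental_group_general (A B : Type) [Group A] [Group B]
    (i₁ : B →* A)
    (i₀inv : A →* B)
    (B' : Subgroup A) (hB' : ∀ a : A, i₁ (i₀inv a) ∈ B') :
    Nonempty
      (PresentedGroup (ascHNNRels A (fun a => i₁ (i₀inv a))) ≃*
       PresentedGroup (ascHNNRels B' (fun b => ⟨i₁ (i₀inv b.val), hB' _⟩))) :=
  ⟨AscHNN.restrictEquiv (i₁.comp i₀inv) B' hB'⟩

/-- Let a graph of groups have one vertex with group `A` and one ascending
loop: edge group `B` with inclusions `i₀, i₁ : B → A`, where `i₀` is an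
isomorphism (with inverse recorded by `i₀inv`) and `i₁` is injective. Let
`φ = i₁ ∘ i₀⁻¹ : A → A` be the monodromy, and let `B'` be a subgroup with
`φ(A) ⊆ B' ⊆ A`. Then the fundamental group, i.e. the ascending HNN
extension of `A` over `φ`, is isomorphic to the ascending HNN extension of
`B'` over the restriction `φ|_{B'}`. -/
theorem induction_move_fundamental_group (A B : Type) [Group A] [Group B]
    (i₀ i₁ : B →* A) (h₀ : Function.Bijective i₀) (h₁ : Function.Injective i₁)
    (i₀inv : A →* B) (hinv : ∀ b : B, i₀inv (i₀ b) = b)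
    (B' : Subgroup A) (hB' : ∀ a : A, i₁ (i₀inv a) ∈ B') :
    Nonempty
      (PresentedGroup (ascHNNRels A (fun a => i₁ (i₀inv a))) ≃*
       PresentedGroup (ascHNNRels B' (fun b => ⟨i₁ (i₀inv b.val), hB' _⟩))) :=
  induction_move_fundamental_group_general A B i₁ i₀inv B' hB'
end

section
/- Let A be a group, φ : A → A an injective endomorphism, and B a subgroup with φ(A) ⊆ B ⊊ A. Suppose C is a group containing B as a proper subgroup. Then the fundamental group of the graph of groups with vertices A, C joined by an edge with group B (inclusions B ↪ A and B ↪ C), together with an ascending loop at A with monodromy φ, is isomorphic to the HNN extension of C over the inclusion B ↪ C twisted by φ|_B, as produced by an A⁻¹-move: namely to ⟨C, t | t b t⁻¹ = φ(b) for all b ∈ B⟩. -/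
/-- The relations presenting the fundamental group of the graph of groups
with two vertices `A`, `C` joined by an edge with group `B` (inclusions
`jA : B → A`, `jC : B → C`), together with an ascending loop at `A` with
monodromy `φ` and stable letter `t = Sum.inr ()`. -/
def loopEdgeRels (A C B : Type) [Group A] [Group C] [Group B]
    (jA : B → A) (jC : B → C) (φ : A → A) :
    Set (FreeGroup ((A ⊕ C) ⊕ Unit)) :=
  {r | (∃ a a' : A, r = FreeGroup.of (Sum.inl (Sum.inl a)) *
          FreeGroup.of (Sum.inl (Sum.inl a')) *
          (FreeGroup.of (Sum.inl (Sum.inl (a * a'))))⁻¹) ∨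
       (∃ c c' : C, r = FreeGroup.of (Sum.inl (Sum.inr c)) *
          FreeGroup.of (Sum.inl (Sum.inr c')) *
          (FreeGroup.of (Sum.inl (Sum.inr (c * c'))))⁻¹) ∨
       (∃ b : B, r = FreeGroup.of (Sum.inl (Sum.inl (jA b))) *
          (FreeGroup.of (Sum.inl (Sum.inr (jC b))))⁻¹) ∨
       (∃ a : A, r = FreeGroup.of (Sum.inr ()) *
          FreeGroup.of (Sum.inl (Sum.inl a)) * (FreeGroup.of (Sum.inr ()))⁻¹ *
          (FreeGroup.of (Sum.inl (Sum.inl (φ a))))⁻¹)}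

/-- The relations presenting `⟨C, t | t b t⁻¹ = φ(b) (b ∈ B)⟩`, where `B`
sits in `C` via `jC` and `ρ : B → B` is the restriction of the monodromy. -/
def targetRels (C B : Type) [Group C] [Group B] (jC : B → C) (ρ : B → B) :
    Set (FreeGroup (C ⊕ Unit)) :=
  {r | (∃ c c' : C, r = FreeGroup.of (Sum.inl c) * FreeGroup.of (Sum.inl c') *
          (FreeGroup.of (Sum.inl (c * c')))⁻¹) ∨
       (∃ b : B, r = FreeGroup.of (Sum.inr ()) * FreeGroup.of (Sum.inl (jC b)) *
          (FreeGroup.of (Sum.inr ()))⁻¹ * (FreeGroup.of (Sum.inl (jC (ρ b))))⁻¹)}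

/-!
In the loop-edge group the loop relation `t a t⁻¹ = φ(a)` with `φ(a) ∈ B` lets one eliminate
the vertex group `A`: `a = t⁻¹ φ(a) t`, and `φ(a) ∈ B` is identified with an element of `C` by
the edge relation. Writing `ψ : A → B` for the corestriction of `φ`, the assignments
`a ↦ t⁻¹ ψ(a) t, c ↦ c, t ↦ t` and `c ↦ c, t ↦ t` respect the relations of the two
presentations and are mutually inverse on generators.
-/

noncomputable def MonoidHom.liftOfInjective {G H N : Type*} [Group G] [Group H] [Group N]
    (f : G →* N) {j : H →* N} (hj : Function.Injective j) (hf : f.range ≤ j.range) : G →* H :=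
  (MonoidHom.ofInjective hj).symm.toMonoidHom.comp (f.codRestrict j.range fun g => hf ⟨g, rfl⟩)

@[simp]
theorem MonoidHom.apply_liftOfInjective {G H N : Type*} [Group G] [Group H] [Group N]
    (f : G →* N) {j : H →* N} (hj : Function.Injective j) (hf : f.range ≤ j.range) (g : G) :
    j (f.liftOfInjective hj hf g) = f g :=
  MonoidHom.apply_ofInjective_symm hj _

namespace PresentedGroup

variable {α G : Type*} [Group G] {rels : Set (FreeGroup α)}

theorem of_mul_of_eq_of {x y z : α}
    (h : FreeGroup.of x * FreeGroup.of y * (FreeGroup.of z)⁻¹ ∈ rels) :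
    (of x : PresentedGroup rels) * of y = of z := by
  have h' := mk_eq_mk_of_mul_inv_mem h
  rwa [map_mul] at h'

theorem of_mul_of_mul_inv_eq_of {x y z : α}
    (h : FreeGroup.of x * FreeGroup.of y * (FreeGroup.of x)⁻¹ * (FreeGroup.of z)⁻¹ ∈ rels) :
    (of x : PresentedGroup rels) * of y * (of x)⁻¹ = of z := by
  have h' := mk_eq_mk_of_mul_inv_mem h
  rwa [map_mul, map_mul, map_inv] at h'

def homOfMulMem (i : G → α)
    (h : ∀ g g', FreeGroup.of (i g) * FreeGroup.of (i g') * (FreeGroup.of (i (g * g')))⁻¹ ∈ rels) :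
    G →* PresentedGroup rels :=
  MonoidHom.mk' (fun g => of (i g)) fun g g' => (of_mul_of_eq_of (h g g')).symm

end PresentedGroup

namespace LoopEdge

variable {A C B : Type} [Group A] [Group C] [Group B] (jA : B →* A) (jC : B →* C) (φ : A →* A)

def vertexA : A →* PresentedGroup (loopEdgeRels A C B jA jC φ) :=
  PresentedGroup.homOfMulMem (Sum.inl ∘ Sum.inl) fun a a' => Or.inl ⟨a, a', rfl⟩

def vertexC : C →* PresentedGroup (loopEdgeRels A C B jA jC φ) :=
  PresentedGroup.homOfMulMem (Sum.inl ∘ Sum.inr) fun c c' => Or.inr (Or.inl ⟨c, c', rfl⟩)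

def stable : PresentedGroup (loopEdgeRels A C B jA jC φ) :=
  .of (Sum.inr ())

variable {jA jC φ}

theorem vertexA_apply_jA (b : B) : vertexA jA jC φ (jA b) = vertexC jA jC φ (jC b) := by
  apply PresentedGroup.mk_eq_mk_of_mul_inv_mem
  exact Or.inr (Or.inr (Or.inl ⟨b, rfl⟩))

theorem stable_mul_vertexA_mul_stable_inv (a : A) :
    stable jA jC φ * vertexA jA jC φ a * (stable jA jC φ)⁻¹ = vertexA jA jC φ (φ a) := by
  apply PresentedGroup.of_mul_of_mul_inv_eq_of
  exact Or.inr (Or.inr (Or.inr ⟨a, rfl⟩))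

theorem stable_inv_mul_vertexA_mul_stable (a : A) :
    (stable jA jC φ)⁻¹ * vertexA jA jC φ (φ a) * stable jA jC φ = vertexA jA jC φ a := by
  rw [← stable_mul_vertexA_mul_stable_inv]
  group

@[ext]
theorem hom_ext {G : Type*} [Group G] {f g : PresentedGroup (loopEdgeRels A C B jA jC φ) →* G}
    (hA : f.comp (vertexA jA jC φ) = g.comp (vertexA jA jC φ))
    (hC : f.comp (vertexC jA jC φ) = g.comp (vertexC jA jC φ))
    (ht : f (stable jA jC φ) = g (stable jA jC φ)) : f = g :=
  PresentedGroup.ext fun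
    | .inl (.inl a) => DFunLike.congr_fun hA a
    | .inl (.inr c) => DFunLike.congr_fun hC c
    | .inr () => ht

end LoopEdge

namespace HNN

variable {C B : Type} [Group C] [Group B] (jC : B →* C) (ρ : B →* B)

def vertex : C →* PresentedGroup (targetRels C B jC ρ) :=
  PresentedGroup.homOfMulMem Sum.inl fun c c' => Or.inl ⟨c, c', rfl⟩

def stable : PresentedGroup (targetRels C B jC ρ) :=
  .of (Sum.inr ())

variable {jC ρ}

theorem stable_mul_vertex_mul_stable_inv (b : B) :
    stable jC ρ * vertex jC ρ (jC b) * (stable jC ρ)⁻¹ = vertex jC ρ (jC (ρ b)) := by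
  apply PresentedGroup.of_mul_of_mul_inv_eq_of
  exact Or.inr ⟨b, rfl⟩

theorem stable_inv_mul_vertex_mul_stable (b : B) :
    (stable jC ρ)⁻¹ * vertex jC ρ (jC (ρ b)) * stable jC ρ = vertex jC ρ (jC b) := by
  rw [← stable_mul_vertex_mul_stable_inv]
  group

@[ext]
theorem hom_ext {G : Type*} [Group G] {f g : PresentedGroup (targetRels C B jC ρ) →* G}
    (hC : f.comp (vertex jC ρ) = g.comp (vertex jC ρ)) (ht : f (stable jC ρ) = g (stable jC ρ)) :
    f = g :=
  PresentedGroup.ext fun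
    | .inl c => DFunLike.congr_fun hC c
    | .inr () => ht

end HNN

namespace AInvMove

variable {A C B : Type} [Group A] [Group C] [Group B] (jA : B →* A) (jC : B →* C) (φ : A →* A)
  (ρ : B →* B) (ψ : A →* B)

def toHNNGen : (A ⊕ C) ⊕ Unit → PresentedGroup (targetRels C B jC ρ)
  | .inl (.inl a) => (HNN.stable jC ρ)⁻¹ * HNN.vertex jC ρ (jC (ψ a)) * HNN.stable jC ρ
  | .inl (.inr c) => HNN.vertex jC ρ c
  | .inr _ => HNN.stable jC ρ

def ofHNNGen : C ⊕ Unit → PresentedGroup (loopEdgeRels A C B jA jC φ)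
  | .inl c => LoopEdge.vertexC jA jC φ c
  | .inr _ => LoopEdge.stable jA jC φ

variable {jA φ ρ ψ} (hψ : ∀ a, jA (ψ a) = φ a) (hψjA : ∀ b, ψ (jA b) = ρ b)
include hψ hψjA

theorem toHNNGen_rels : ∀ r ∈ loopEdgeRels A C B jA jC φ,
    FreeGroup.lift (toHNNGen jC ρ ψ) r = 1 := by
  rintro r (⟨a, a', rfl⟩ | ⟨c, c', rfl⟩ | ⟨b, rfl⟩ | ⟨a, rfl⟩) <;>
    simp only [map_mul, map_inv, FreeGroup.lift_apply_of, toHNNGen, mul_inv_eq_one]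
  · group
  · rw [hψjA, HNN.stable_inv_mul_vertex_mul_stable]
  · rw [← hψ, hψjA, HNN.stable_inv_mul_vertex_mul_stable]
    group

theorem ofHNNGen_rels : ∀ r ∈ targetRels C B jC ρ,
    FreeGroup.lift (ofHNNGen jA jC φ) r = 1 := by
  rintro r (⟨c, c', rfl⟩ | ⟨b, rfl⟩) <;>
    simp only [map_mul, map_inv, FreeGroup.lift_apply_of, ofHNNGen, mul_inv_eq_one]
  rw [← LoopEdge.vertexA_apply_jA, ← LoopEdge.vertexA_apply_jA, ← hψjA, hψ,
    LoopEdge.stable_mul_vertexA_mul_stable_inv]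

def toHNN : PresentedGroup (loopEdgeRels A C B jA jC φ) →* PresentedGroup (targetRels C B jC ρ) :=
  PresentedGroup.toGroup (toHNNGen_rels jC hψ hψjA)

def ofHNN : PresentedGroup (targetRels C B jC ρ) →* PresentedGroup (loopEdgeRels A C B jA jC φ) :=
  PresentedGroup.toGroup (ofHNNGen_rels jC hψ hψjA)

@[simp]
theorem toHNN_vertexA (a : A) : toHNN jC hψ hψjA (LoopEdge.vertexA jA jC φ a) =
    (HNN.stable jC ρ)⁻¹ * HNN.vertex jC ρ (jC (ψ a)) * HNN.stable jC ρ :=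
  PresentedGroup.toGroup.of _

@[simp]
theorem toHNN_vertexC (c : C) :
    toHNN jC hψ hψjA (LoopEdge.vertexC jA jC φ c) = HNN.vertex jC ρ c :=
  PresentedGroup.toGroup.of _

@[simp]
theorem toHNN_stable : toHNN jC hψ hψjA (LoopEdge.stable jA jC φ) = HNN.stable jC ρ :=
  PresentedGroup.toGroup.of _

@[simp]
theorem ofHNN_vertex (c : C) :
    ofHNN jC hψ hψjA (HNN.vertex jC ρ c) = LoopEdge.vertexC jA jC φ c :=
  PresentedGroup.toGroup.of _

@[simp]
theorem ofHNN_stable : ofHNN jC hψ hψjA (HNN.stable jC ρ) = LoopEdge.stable jA jC φ :=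
  PresentedGroup.toGroup.of _

theorem ofHNN_comp_toHNN : (ofHNN jC hψ hψjA).comp (toHNN jC hψ hψjA) = MonoidHom.id _ := by
  ext <;> simp [← LoopEdge.vertexA_apply_jA, hψ, LoopEdge.stable_inv_mul_vertexA_mul_stable]

theorem toHNN_comp_ofHNN : (toHNN jC hψ hψjA).comp (ofHNN jC hψ hψjA) = MonoidHom.id _ := by
  ext <;> simp

def loopEdgeEquivHNN :
    PresentedGroup (loopEdgeRels A C B jA jC φ) ≃* PresentedGroup (targetRels C B jC ρ) :=
  (toHNN jC hψ hψjA).toMulEquiv (ofHNN jC hψ hψjA) (ofHNN_comp_toHNN jC hψ hψjA)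
    (toHNN_comp_ofHNN jC hψ hψjA)

end AInvMove

theorem aInv_move_fundamental_group_general (A C B : Type) [Group A] [Group C] [Group B]
    (jA : B →* A) (jC : B →* C) (hjA : Function.Injective jA)
    (φ : A →* A)
    (hφB : ∀ a : A, ∃ b : B, φ a = jA b)
    (ρ : B →* B) (hρ : ∀ b : B, jA (ρ b) = φ (jA b)) :
    Nonempty
      (PresentedGroup (loopEdgeRels A C B jA jC φ) ≃*
       PresentedGroup (targetRels C B jC ρ)) := by
  have hrange : φ.range ≤ jA.range := by
    rintro _ ⟨a, rfl⟩
    obtain ⟨b, hb⟩ := hφB a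
    exact ⟨b, hb.symm⟩
  let ψ := φ.liftOfInjective hjA hrange
  have hψ : ∀ a, jA (ψ a) = φ a := φ.apply_liftOfInjective hjA hrange
  have hψjA : ∀ b, ψ (jA b) = ρ b := fun b => hjA (by rw [hψ, hρ])
  exact ⟨AInvMove.loopEdgeEquivHNN jC hψ hψjA⟩

/-- The `A⁻¹`-move on fundamental groups. Let `φ : A → A` be an injective
endomorphism, `B` a subgroup (embedded by `jA`) with `φ(A) ⊆ B ⊊ A`, and `C`
a group containing `B` properly (via `jC`). Let `ρ : B → B` be the restriction
`φ|_B` (so `jA (ρ b) = φ (jA b)`). Then the fundamental group of the graph of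
groups with vertices `A`, `C` joined by an edge with group `B` and an
ascending loop at `A` with monodromy `φ` is isomorphic to the HNN extension
`⟨C, t | t b t⁻¹ = φ(b) (b ∈ B)⟩`. -/
theorem aInv_move_fundamental_group (A C B : Type) [Group A] [Group C] [Group B]
    (jA : B →* A) (jC : B →* C) (hjA : Function.Injective jA)
    (hjC : Function.Injective jC) (φ : A →* A) (hφ : Function.Injective φ)
    (hφB : ∀ a : A, ∃ b : B, φ a = jA b)
    (hBA : ∃ a : A, ∀ b : B, a ≠ jA b)
    (hBC : ∃ c : C, ∀ b : B, c ≠ jC b)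
    (ρ : B →* B) (hρ : ∀ b : B, jA (ρ b) = φ (jA b)) :
    Nonempty
      (PresentedGroup (loopEdgeRels A C B jA jC φ) ≃*
       PresentedGroup (targetRels C B jC ρ)) :=
  aInv_move_fundamental_group_general A C B jA jC hjA φ hφB ρ hρ
end
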